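/- arXiv:math/0308030 — 5 statements merged into one kernel-verified Lean document; each statement's English description precedes it below -/
import Mathlib

section
/- Let (t_i)_{i≥1} be a strictly increasing sequence of reals with t₁ = 1. For a sequence (δ_i) of positive reals define step_t((δ_i)) : [1,∞) → (0,∞) to be the function whose value on [t_i, t_{i+1}) is δ_i. Suppose T is a set of sequences of positive reals satisfying: (A') for (δ_i) ∈ T and k ∈ ℤ the shifted sequence (δ_{i+k}) (with δ_{i+k} := δ₁ when i+k ≤ 0) is in T; and (B') for (δ_i), (δ'_i) ∈ T there is (δ''_i) ∈ T with δ_i + δ'_i ≤ δ''_i for all i. Then S = step_t(T) satisfies: (A) for each f ∈ S and α ∈ ℝ there exist f' ∈ S and t₀ ≥ 1 such that f(t+α) ≤ f'(t) for all t ≥ t₀ + |α|, provided t_{i+1} − t_i ≥ i for all i; and (B) for f, f' ∈ S there exist f'' ∈ S and t₀ ≥ 1 with f(t) + f'(t) ≤ f''(t) for all t ≥ t₀. -/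
/-- Index shift for sequences, with indices `≤ 0` interpreted as `1`. -/
def shiftIdx (k : ℤ) (i : ℕ) : ℕ := max 1 ((i : ℤ) + k).toNat

/-- `f` is the step function associated to the sequence `δ` and the partition points `t`:
its value on `[t i, t (i+1))` is `δ i`. -/
def IsStep (t : ℕ → ℝ) (δ : ℕ → ℝ) (f : ℝ → ℝ) : Prop :=
  ∀ i : ℕ, 1 ≤ i → ∀ x : ℝ, t i ≤ x → x < t (i + 1) → f x = δ i

/-- The index `i` such that `x ∈ [t i, t (i+1))`. -/
noncomputable def idxOf (t : ℕ → ℝ) (x : ℝ) : ℕ :=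
  Nat.findGreatest (fun i => 1 ≤ i ∧ t i ≤ x) ⌈x⌉₊

/-- The step function associated to `δ`. -/
noncomputable def stepFun (t : ℕ → ℝ) (δ : ℕ → ℝ) (x : ℝ) : ℝ := δ (idxOf t x)

section aux
variable {t : ℕ → ℝ}

lemma tn_ge (ht1 : t 1 = 1) (hgap : ∀ i : ℕ, 1 ≤ i → (i : ℝ) ≤ t (i + 1) - t i) :
    ∀ n : ℕ, 1 ≤ n → (n : ℝ) ≤ t n := by
  intro n hn
  induction n with
  | zero => omega
  | succ m ih =>
    rcases Nat.lt_or_ge m 1 with hm | hm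
    · interval_cases m
      simp [ht1]
    · have h1 := ih hm
      have h2 := hgap m hm
      have h3 : (1:ℝ) ≤ (m:ℝ) := by exact_mod_cast hm
      push_cast
      linarith

lemma le_idxOf (ht1 : t 1 = 1) (hgap : ∀ i : ℕ, 1 ≤ i → (i : ℝ) ≤ t (i + 1) - t i)
    {m : ℕ} (hm : 1 ≤ m) {x : ℝ} (htm : t m ≤ x) : m ≤ idxOf t x := by
  have hmx : (m:ℝ) ≤ x := le_trans (tn_ge ht1 hgap m hm) htm
  have hmc : m ≤ ⌈x⌉₊ := by
    calc m = ⌈(m:ℝ)⌉₊ := (Nat.ceil_natCast m).symm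
    _ ≤ ⌈x⌉₊ := Nat.ceil_mono hmx
  unfold idxOf
  exact Nat.le_findGreatest hmc ⟨hm, htm⟩

lemma idxOf_spec (ht1 : t 1 = 1) (hmono : StrictMonoOn t {i : ℕ | 1 ≤ i})
    (hgap : ∀ i : ℕ, 1 ≤ i → (i : ℝ) ≤ t (i + 1) - t i)
    {x : ℝ} (hx : 1 ≤ x) :
    1 ≤ idxOf t x ∧ t (idxOf t x) ≤ x ∧ x < t (idxOf t x + 1) := by
  have h1 : 1 ≤ idxOf t x := le_idxOf ht1 hgap le_rfl (by rw [ht1]; exact hx)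
  have hc1 : 1 ≤ ⌈x⌉₊ := Nat.one_le_ceil_iff.mpr (by linarith)
  have hspec : 1 ≤ idxOf t x ∧ t (idxOf t x) ≤ x := by
    unfold idxOf
    exact Nat.findGreatest_spec (P := fun i => 1 ≤ i ∧ t i ≤ x) (m := 1) hc1
      ⟨le_rfl, by rw [ht1]; exact hx⟩
  refine ⟨h1, hspec.2, ?_⟩
  by_contra h
  push_neg at h
  have := le_idxOf ht1 hgap (by omega : 1 ≤ idxOf t x + 1) h
  omega

lemma mono' (hmono : StrictMonoOn t {i : ℕ | 1 ≤ i}) {a b : ℕ} (ha : 1 ≤ a) (hab : a ≤ b) :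
    t a ≤ t b :=
  hmono.monotoneOn (Set.mem_setOf.mpr ha) (Set.mem_setOf.mpr (le_trans ha hab)) hab

lemma idxOf_eq (ht1 : t 1 = 1) (hmono : StrictMonoOn t {i : ℕ | 1 ≤ i})
    (hgap : ∀ i : ℕ, 1 ≤ i → (i : ℝ) ≤ t (i + 1) - t i)
    {i : ℕ} (hi : 1 ≤ i) {x : ℝ} (hl : t i ≤ x) (hr : x < t (i + 1)) :
    idxOf t x = i := by
  have hx : 1 ≤ x := by
    have := mono' hmono le_rfl hi
    rw [ht1] at this
    linarith
  obtain ⟨hj1, hjl, hjr⟩ := idxOf_spec ht1 hmono hgap hx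
  rcases lt_trichotomy (idxOf t x) i with h | h | h
  · have : t (idxOf t x + 1) ≤ t i := mono' hmono (by omega) (by omega)
    linarith
  · exact h
  · have : t (i + 1) ≤ t (idxOf t x) := mono' hmono (by omega) (by omega)
    linarith

lemma isStep_stepFun (ht1 : t 1 = 1) (hmono : StrictMonoOn t {i : ℕ | 1 ≤ i})
    (hgap : ∀ i : ℕ, 1 ≤ i → (i : ℝ) ≤ t (i + 1) - t i) (δ : ℕ → ℝ) :
    IsStep t δ (stepFun t δ) := by
  intro i hi x hl hr
  unfold stepFun
  rw [idxOf_eq ht1 hmono hgap hi hl hr]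

end aux

/-- If `T` is a set of sequences of positive reals closed under index shifts (A') and
under sums (B'), and `t_{i+1} − t_i ≥ i`, then the associated set of step functions
`S = step_t(T)` satisfies the decay-speed axioms (A) and (B). -/
theorem stmt3 (t : ℕ → ℝ) (ht1 : t 1 = 1)
    (hmono : StrictMonoOn t {i : ℕ | 1 ≤ i})
    (hgap : ∀ i : ℕ, 1 ≤ i → (i : ℝ) ≤ t (i + 1) - t i)
    (T : Set (ℕ → ℝ)) (hpos : ∀ δ ∈ T, ∀ i, 0 < δ i)
    (hshift : ∀ δ ∈ T, ∀ k : ℤ, (fun i => δ (shiftIdx k i)) ∈ T)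
    (hsum : ∀ δ ∈ T, ∀ δ' ∈ T, ∃ δ'' ∈ T, ∀ i, δ i + δ' i ≤ δ'' i)
    (S : Set (ℝ → ℝ)) (hS : S = {f | ∃ δ ∈ T, IsStep t δ f}) :
    (∀ f ∈ S, ∀ α : ℝ, ∃ f' ∈ S, ∃ t₀ : ℝ, 1 ≤ t₀ ∧
        ∀ x : ℝ, t₀ + |α| ≤ x → f (x + α) ≤ f' x) ∧
    (∀ f ∈ S, ∀ g ∈ S, ∃ h ∈ S, ∃ t₀ : ℝ, 1 ≤ t₀ ∧
        ∀ x : ℝ, t₀ ≤ x → f x + g x ≤ h x) := by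
  -- the value of a step function is determined by `idxOf`
  have key : ∀ (δ : ℕ → ℝ) (f : ℝ → ℝ), IsStep t δ f → ∀ x : ℝ, 1 ≤ x → f x = δ (idxOf t x) := by
    intro δ f hf x hx
    obtain ⟨h1, h2, h3⟩ := idxOf_spec ht1 hmono hgap hx
    exact hf _ h1 x h2 h3
  constructor
  · -- (A)
    intro f hf α
    rw [hS] at hf
    obtain ⟨δ, hδT, hδf⟩ := hf
    have hδm := hshift δ hδT (-1)
    have hδp := hshift δ hδT 1
    have hδ0 := hshift δ hδT 0
    obtain ⟨σ, hσT, hσ⟩ := hsum _ hδm _ hδp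
    obtain ⟨τ, hτT, hτ⟩ := hsum _ hσT _ hδ0
    set N : ℕ := ⌈|α|⌉₊ + 2 with hN
    have habs : (0:ℝ) ≤ |α| := abs_nonneg α
    have hceil : |α| ≤ (⌈|α|⌉₊ : ℝ) := Nat.le_ceil _
    have hNle : (N : ℝ) ≤ t N := tn_ge ht1 hgap N (by omega)
    have hN2 : (2:ℝ) ≤ (N:ℝ) := by
      have : (2:ℕ) ≤ N := by omega
      exact_mod_cast this
    refine ⟨stepFun t τ, by rw [hS]; exact ⟨τ, hτT, isStep_stepFun ht1 hmono hgap τ⟩,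
      t N, by linarith, ?_⟩
    intro x hx
    have hx1 : (1:ℝ) ≤ x := by linarith
    obtain ⟨hi1, hil, hir⟩ := idxOf_spec ht1 hmono hgap hx1
    set i := idxOf t x with hidef
    have hiN : N ≤ i := by
      by_contra h
      push_neg at h
      have : t (i + 1) ≤ t N := mono' hmono (by omega) (by omega)
      linarith
    have hxα1 : (1:ℝ) ≤ x + α := by
      have : -|α| ≤ α := neg_abs_le α
      linarith
    obtain ⟨hj1, hjl, hjr⟩ := idxOf_spec ht1 hmono hgap hxα1
    set j := idxOf t (x + α) with hjdef
    -- f (x+α) = δ j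
    have hfx : f (x + α) = δ j := key δ f hδf _ hxα1
    -- i = m + 1 with m ≥ 1
    obtain ⟨m, him⟩ : ∃ m, i = m + 1 := ⟨i - 1, by omega⟩
    rw [him] at hil hir hiN
    have hm1 : 1 ≤ m := by omega
    -- upper bound: j ≤ m + 2
    have hmα : |α| ≤ (m : ℝ) := by
      have h1 : ((⌈|α|⌉₊:ℕ):ℝ) + 2 ≤ ((m:ℝ) + 1) := by
        have : (N:ℝ) ≤ ((m+1:ℕ):ℝ) := by exact_mod_cast hiN
        push_cast [hN] at this
        push_cast
        linarith
      linarith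
    have hjub : j ≤ m + 2 := by
      by_contra h
      push_neg at h
      have h3 : t (m + 3) ≤ t j := mono' hmono (by omega) (by omega)
      have hgap2 := hgap (m + 2) (by omega)
      have : x + α ≤ x + |α| := by have := le_abs_self α; linarith
      have hm2 : (m:ℝ) + 2 = ((m+2 : ℕ) : ℝ) := by push_cast; ring
      -- x + α < t(m+2) + |α| ≤ t(m+3)
      have hcast : ((m+2:ℕ):ℝ) ≤ t ((m+2)+1) - t (m+2) := hgap (m+2) (by omega)
      have hmm : (m:ℝ) + 2 ≤ t (m+3) - t (m+2) := by
        push_cast at hcast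
        have e : (m:ℕ) + 2 + 1 = m + 3 := by omega
        rw [e] at hcast
        linarith
      push_cast at h3 hjl hir ⊢
      have e2 : (m:ℕ) + 1 + 1 = m + 2 := by omega
      rw [e2] at hir
      linarith
    have hjlb : m ≤ j := by
      have hgap1 := hgap m hm1
      have : t m ≤ x + α := by
        have h1 : t m + (m:ℝ) ≤ t (m + 1) := by linarith
        have h2 : -|α| ≤ α := neg_abs_le α
        linarith
      exact le_idxOf ht1 hgap hm1 this
    -- now bound δ j by τ (m+1)
    have hτi := hτ (m + 1)
    have hσi := hσ (m + 1)
    have e1 : shiftIdx (-1) (m + 1) = m := by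
      unfold shiftIdx
      omega
    have e2 : shiftIdx 1 (m + 1) = m + 2 := by
      unfold shiftIdx
      omega
    have e3 : shiftIdx 0 (m + 1) = m + 1 := by
      unfold shiftIdx
      omega
    rw [e1, e2] at hσi
    rw [e3] at hτi
    have p1 : 0 < δ m := hpos δ hδT m
    have p2 : 0 < δ (m + 1) := hpos δ hδT (m + 1)
    have p3 : 0 < δ (m + 2) := hpos δ hδT (m + 2)
    have hfx' : stepFun t τ x = τ (m + 1) := by
      unfold stepFun
      rw [← hidef, him]
    rw [hfx, hfx']
    have hj3 : j = m ∨ j = m + 1 ∨ j = m + 2 := by omega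
    rcases hj3 with h | h | h <;> rw [h] <;> linarith
  · -- (B)
    intro f hf g hg
    rw [hS] at hf hg
    obtain ⟨δ, hδT, hδf⟩ := hf
    obtain ⟨δ', hδ'T, hδ'g⟩ := hg
    obtain ⟨δ'', hδ''T, hle⟩ := hsum δ hδT δ' hδ'T
    refine ⟨stepFun t δ'', by rw [hS]; exact ⟨δ'', hδ''T, isStep_stepFun ht1 hmono hgap δ''⟩,
      1, le_rfl, ?_⟩
    intro x hx
    rw [key δ f hδf x hx, key δ' g hδ'g x hx]
    exact hle (idxOf t x)
end

section
/- Let (Δ'_i)_{i∈ℕ} be a family of functions Δ'_i : (0,∞) → (0,∞] such that: (a) for each fixed i, Δ'_i(δ) ≥ 2δ, Δ'_i is monotone (nondecreasing) in δ, and Δ'_i(δ) → 0 as δ → 0; (b) for fixed δ, i ↦ Δ'_i(δ) is monotone nondecreasing. Let (ε_i) be a sequence of positive reals. Define T to be the set of all sequences (δ_i) of positive reals such that for all k, l ∈ ℤ and j ∈ ℕ₀ there exists i₀ with (Δ'_{i+l})^{∘j}(δ_{i+k}) < ε_i for all i ≥ i₀ (indices ≤ 0 interpreted via δ₁ and Δ'₁).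 Then T is nonempty and satisfies: (i) each (δ_i) ∈ T is eventually smaller than (ε_i); (ii) for (δ_i) ∈ T the sequence (Δ'_i(δ_i)) (eventually defined) is again in T; (iii) T is closed under doubling, pointwise maximum, and pointwise domination from below; (iv) T is closed under index shifts; (v) for (δ_i),(δ'_i) ∈ T there is (δ''_i) ∈ T with δ_i + δ'_i ≤ δ''_i for all i. -/
/-- Interpret an integer index as a positive natural number index (indices `≤ 0` become `1`). -/
def idx (m : ℤ) : ℕ := max 1 m.toNat

lemma one_le_idx (m : ℤ) : 1 ≤ idx m := le_max_left _ _

lemma idx_cast {i : ℕ} {k : ℤ} (h : 1 ≤ (i:ℤ) + k) :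
    (idx ((i:ℤ) + k) : ℤ) = (i:ℤ) + k := by unfold idx; omega

lemma idx_mono {m m' : ℤ} (h : m ≤ m') : idx m ≤ idx m' := by unfold idx; omega

lemma idx_le {m : ℤ} {p : ℕ} (h1 : 1 ≤ p) (h : m ≤ (p:ℤ)) : idx m ≤ p := by unfold idx; omega

section
variable {Δ : ℕ → ℝ → ℝ}

lemma self_le_apply (hΔ2 : ∀ i : ℕ, ∀ x : ℝ, 0 < x → 2 * x ≤ Δ i x)
    {n : ℕ} {x : ℝ} (hx : 0 < x) : x ≤ Δ n x := by
  have := hΔ2 n x hx; linarith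

lemma iter_pos (hΔ2 : ∀ i : ℕ, ∀ x : ℝ, 0 < x → 2 * x ≤ Δ i x)
    (n j : ℕ) {x : ℝ} (hx : 0 < x) : 0 < (Δ n)^[j] x := by
  induction j with
  | zero => simpa
  | succ j ih =>
    rw [Function.iterate_succ_apply']
    exact ih.trans_le (self_le_apply hΔ2 ih)

lemma le_iter (hΔ2 : ∀ i : ℕ, ∀ x : ℝ, 0 < x → 2 * x ≤ Δ i x)
    (n j : ℕ) {x : ℝ} (hx : 0 < x) : x ≤ (Δ n)^[j] x := by
  induction j with
  | zero => simp
  | succ j ih =>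
    rw [Function.iterate_succ_apply']
    exact ih.trans (self_le_apply hΔ2 (iter_pos hΔ2 n j hx))

lemma iter_mono_x (hΔ2 : ∀ i : ℕ, ∀ x : ℝ, 0 < x → 2 * x ≤ Δ i x)
    (hΔmono : ∀ i, MonotoneOn (Δ i) (Set.Ioi (0 : ℝ)))
    (n j : ℕ) {x y : ℝ} (hx : 0 < x) (hxy : x ≤ y) :
    (Δ n)^[j] x ≤ (Δ n)^[j] y := by
  induction j with
  | zero => simpa
  | succ j ih =>
    rw [Function.iterate_succ_apply', Function.iterate_succ_apply']
    exact hΔmono n (iter_pos hΔ2 n j hx) (iter_pos hΔ2 n j (hx.trans_le hxy)) ih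

lemma iter_mono_idx (hΔ2 : ∀ i : ℕ, ∀ x : ℝ, 0 < x → 2 * x ≤ Δ i x)
    (hΔmono : ∀ i, MonotoneOn (Δ i) (Set.Ioi (0 : ℝ)))
    (hΔi : ∀ i j : ℕ, i ≤ j → ∀ x : ℝ, 0 < x → Δ i x ≤ Δ j x)
    {n m : ℕ} (hnm : n ≤ m) (j : ℕ) {x : ℝ} (hx : 0 < x) :
    (Δ n)^[j] x ≤ (Δ m)^[j] x := by
  induction j with
  | zero => simp
  | succ j ih =>
    rw [Function.iterate_succ_apply', Function.iterate_succ_apply']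
    calc Δ n ((Δ n)^[j] x) ≤ Δ n ((Δ m)^[j] x) :=
          hΔmono n (iter_pos hΔ2 n j hx) (iter_pos hΔ2 m j hx) ih
      _ ≤ Δ m ((Δ m)^[j] x) := hΔi n m hnm _ (iter_pos hΔ2 m j hx)

lemma iter_mono_all (hΔ2 : ∀ i : ℕ, ∀ x : ℝ, 0 < x → 2 * x ≤ Δ i x)
    (hΔmono : ∀ i, MonotoneOn (Δ i) (Set.Ioi (0 : ℝ)))
    (hΔi : ∀ i j : ℕ, i ≤ j → ∀ x : ℝ, 0 < x → Δ i x ≤ Δ j x)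
    {n m j J : ℕ} (hnm : n ≤ m) (hjJ : j ≤ J) {x : ℝ} (hx : 0 < x) :
    (Δ n)^[j] x ≤ (Δ m)^[J] x := by
  calc (Δ n)^[j] x ≤ (Δ m)^[j] x := iter_mono_idx hΔ2 hΔmono hΔi hnm j hx
    _ ≤ (Δ m)^[J - j + j] x := by
        rw [Function.iterate_add_apply]
        exact le_iter hΔ2 m (J - j) (iter_pos hΔ2 m j hx)
    _ = (Δ m)^[J] x := by congr 1; omega

lemma iter_tendsto (hΔ2 : ∀ i : ℕ, ∀ x : ℝ, 0 < x → 2 * x ≤ Δ i x)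
    (hΔ0 : ∀ i, Filter.Tendsto (Δ i) (nhdsWithin 0 (Set.Ioi (0 : ℝ))) (nhds 0))
    (n j : ℕ) :
    Filter.Tendsto ((Δ n)^[j]) (nhdsWithin 0 (Set.Ioi (0:ℝ))) (nhdsWithin 0 (Set.Ioi (0:ℝ))) := by
  have hstep : Filter.Tendsto (Δ n) (nhdsWithin 0 (Set.Ioi (0:ℝ)))
      (nhdsWithin 0 (Set.Ioi (0:ℝ))) := by
    refine tendsto_nhdsWithin_iff.mpr ⟨hΔ0 n, ?_⟩
    filter_upwards [self_mem_nhdsWithin] with x hx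
    exact Set.mem_Ioi.mpr (lt_of_lt_of_le (by have := Set.mem_Ioi.mp hx; linarith) (hΔ2 n x hx))
  induction j with
  | zero => simpa using Filter.tendsto_id
  | succ j ih =>
    rw [Function.iterate_succ']
    exact hstep.comp ih

end


/-- Lemma `construct-T`: given thickening functions `Δ'_i` (each `≥ 2δ`, monotone in `δ`,
tending to `0` at `0`, and monotone in `i`) and a sequence `ε_i > 0`, the set `T` of all
sequences of positive reals `(δ_i)` such that for all `k, l ∈ ℤ`, `j ∈ ℕ`, eventually
`(Δ'_{i+l})^{∘j}(δ_{i+k}) < ε_i`, is nonempty and has the stated closure properties. -/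
theorem stmt4 (Δ : ℕ → ℝ → ℝ)
    (hΔ2 : ∀ i : ℕ, ∀ x : ℝ, 0 < x → 2 * x ≤ Δ i x)
    (hΔmono : ∀ i, MonotoneOn (Δ i) (Set.Ioi (0 : ℝ)))
    (hΔ0 : ∀ i, Filter.Tendsto (Δ i) (nhdsWithin 0 (Set.Ioi (0 : ℝ))) (nhds 0))
    (hΔi : ∀ i j : ℕ, i ≤ j → ∀ x : ℝ, 0 < x → Δ i x ≤ Δ j x)
    (ε : ℕ → ℝ) (hε : ∀ i, 0 < ε i)
    (T : Set (ℕ → ℝ))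
    (hT : T = {δ : ℕ → ℝ | (∀ i, 0 < δ i) ∧ ∀ k l : ℤ, ∀ j : ℕ, ∃ i₀ : ℕ, ∀ i ≥ i₀,
        (Δ (idx ((i : ℤ) + l)))^[j] (δ (idx ((i : ℤ) + k))) < ε i}) :
    T.Nonempty ∧
    (∀ δ ∈ T, ∃ i₀, ∀ i ≥ i₀, δ i < ε i) ∧
    (∀ δ ∈ T, (fun i => Δ i (δ i)) ∈ T) ∧
    (∀ δ ∈ T, (fun i => 2 * δ i) ∈ T) ∧
    (∀ δ ∈ T, ∀ δ' ∈ T, (fun i => max (δ i) (δ' i)) ∈ T) ∧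
    (∀ δ ∈ T, ∀ δ' : ℕ → ℝ, (∀ i, 0 < δ' i) → (∀ i, δ' i ≤ δ i) → δ' ∈ T) ∧
    (∀ δ ∈ T, ∀ k : ℤ, (fun i : ℕ => δ (idx ((i : ℤ) + k))) ∈ T) ∧
    (∀ δ ∈ T, ∀ δ' ∈ T, ∃ δ'' ∈ T, ∀ i, δ i + δ' i ≤ δ'' i) := by
  have hmem : ∀ f : ℕ → ℝ, f ∈ T ↔ ((∀ i, 0 < f i) ∧ ∀ k l : ℤ, ∀ j : ℕ, ∃ i₀ : ℕ,
      ∀ i ≥ i₀, (Δ (idx ((i : ℤ) + l)))^[j] (f (idx ((i : ℤ) + k))) < ε i) := by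
    intro f; rw [hT]; exact Iff.rfl
  -- nonemptiness
  have hne : T.Nonempty := by
    set e : ℕ → ℝ := fun n => (Finset.range (2*n+1)).inf' (by simp) ε with he
    have hepos : ∀ n, 0 < e n := fun n => (Finset.lt_inf'_iff _).mpr (fun m _ => hε m)
    have hex : ∀ n : ℕ, ∃ x : ℝ, 0 < x ∧ (Δ (2*n))^[2*n] x < e n := by
      intro n
      have h1 := (iter_tendsto hΔ2 hΔ0 (2*n) (2*n)).mono_right nhdsWithin_le_nhds
      have h2 : ((Δ (2*n))^[2*n]) ⁻¹' Set.Iio (e n) ∈ nhdsWithin 0 (Set.Ioi (0:ℝ)) :=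
        h1 (Iio_mem_nhds (hepos n))
      obtain ⟨x, hx1, hx2⟩ := Filter.nonempty_of_mem (Filter.inter_mem h2 self_mem_nhdsWithin)
      exact ⟨x, hx2, hx1⟩
    choose d hd1 hd2 using hex
    refine ⟨d, (hmem d).mpr ⟨hd1, ?_⟩⟩
    intro k l j
    refine ⟨(1 - k).toNat + (l - 2*k).toNat + (0 - 2*k).toNat + j + (0-k).toNat,
      fun i hi => ?_⟩
    set n := idx ((i:ℤ) + k) with hn
    have hk1 : 1 ≤ (i:ℤ) + k := by omega
    have hnc : (n:ℤ) = (i:ℤ) + k := idx_cast hk1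
    have h1 : idx ((i:ℤ) + l) ≤ 2*n := idx_le (by omega) (by push_cast; omega)
    have h2 : j ≤ 2*n := by omega
    calc (Δ (idx ((i:ℤ)+l)))^[j] (d n) ≤ (Δ (2*n))^[2*n] (d n) :=
          iter_mono_all hΔ2 hΔmono hΔi h1 h2 (hd1 n)
      _ < e n := hd2 n
      _ ≤ ε i := Finset.inf'_le _ (Finset.mem_range.mpr (by omega))
  -- eventually smaller than ε
  have hev : ∀ δ ∈ T, ∃ i₀, ∀ i ≥ i₀, δ i < ε i := by
    intro δ hδ
    obtain ⟨hpos, hcond⟩ := (hmem δ).mp hδ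
    obtain ⟨i₀, hi₀⟩ := hcond 0 0 0
    refine ⟨max i₀ 1, fun i hi => ?_⟩
    have h := hi₀ i (le_trans (le_max_left _ _) hi)
    simpa [show idx ((i:ℕ):ℤ) = i by unfold idx; omega] using h
  -- closed under Δ application
  have hΔT : ∀ δ ∈ T, (fun i => Δ i (δ i)) ∈ T := by
    intro δ hδ
    obtain ⟨hpos, hcond⟩ := (hmem δ).mp hδ
    refine (hmem _).mpr ⟨fun i => lt_of_lt_of_le (by have := hpos i; linarith)
      (hΔ2 i _ (hpos i)), fun k l j => ?_⟩
    obtain ⟨i₀, hi₀⟩ := hcond k (max k l) (j+1)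
    refine ⟨i₀, fun i hi => ?_⟩
    have hi' := hi₀ i hi
    set a := idx ((i:ℤ)+k) with ha
    set b := idx ((i:ℤ)+l) with hb
    set m := idx ((i:ℤ)+max k l) with hm
    have ham : a ≤ m := idx_mono (by omega)
    have hbm : b ≤ m := idx_mono (by omega)
    have hx := hpos a
    have h1 : Δ a (δ a) ≤ Δ m (δ a) := hΔi a m ham _ hx
    have hpos1 : 0 < Δ a (δ a) := lt_of_lt_of_le (by linarith) (hΔ2 a _ hx)
    show (Δ b)^[j] (Δ a (δ a)) < ε i
    calc (Δ b)^[j] (Δ a (δ a)) ≤ (Δ m)^[j] (Δ a (δ a)) :=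
          iter_mono_idx hΔ2 hΔmono hΔi hbm j hpos1
      _ ≤ (Δ m)^[j] (Δ m (δ a)) := iter_mono_x hΔ2 hΔmono m j hpos1 h1
      _ = (Δ m)^[j+1] (δ a) := (Function.iterate_succ_apply _ _ _).symm
      _ < ε i := hi'
  -- closed under domination from below
  have hdom : ∀ δ ∈ T, ∀ δ' : ℕ → ℝ, (∀ i, 0 < δ' i) → (∀ i, δ' i ≤ δ i) → δ' ∈ T := by
    intro δ hδ δ' hpos' hle
    obtain ⟨hpos, hcond⟩ := (hmem δ).mp hδ
    refine (hmem δ').mpr ⟨hpos', fun k l j => ?_⟩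
    obtain ⟨i₀, hi₀⟩ := hcond k l j
    exact ⟨i₀, fun i hi => lt_of_le_of_lt
      (iter_mono_x hΔ2 hΔmono _ j (hpos' _) (hle _)) (hi₀ i hi)⟩
  -- closed under doubling
  have hdouble : ∀ δ ∈ T, (fun i => 2 * δ i) ∈ T := by
    intro δ hδ
    obtain ⟨hp, _⟩ := (hmem δ).mp hδ
    exact hdom _ (hΔT δ hδ) _ (fun i => by have := hp i; positivity)
      (fun i => hΔ2 i _ (hp i))
  -- closed under max
  have hmaxT : ∀ δ ∈ T, ∀ δ' ∈ T, (fun i => max (δ i) (δ' i)) ∈ T := by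
    intro δ hδ δ' hδ'
    obtain ⟨hp, hc⟩ := (hmem δ).mp hδ
    obtain ⟨hp', hc'⟩ := (hmem δ').mp hδ'
    refine (hmem _).mpr ⟨fun i => lt_max_of_lt_left (hp i), fun k l j => ?_⟩
    obtain ⟨i₀, h1⟩ := hc k l j
    obtain ⟨i₁, h2⟩ := hc' k l j
    refine ⟨max i₀ i₁, fun i hi => ?_⟩
    show (Δ (idx ((i:ℤ)+l)))^[j] (max (δ (idx ((i:ℤ)+k))) (δ' (idx ((i:ℤ)+k)))) < ε i
    rcases max_choice (δ (idx ((i:ℤ)+k))) (δ' (idx ((i:ℤ)+k))) with h | h <;> rw [h]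
    · exact h1 i (le_trans (le_max_left _ _) hi)
    · exact h2 i (le_trans (le_max_right _ _) hi)
  -- closed under shifts
  have hshift : ∀ δ ∈ T, ∀ k : ℤ, (fun i : ℕ => δ (idx ((i : ℤ) + k))) ∈ T := by
    intro δ hδ k
    obtain ⟨hp, hc⟩ := (hmem δ).mp hδ
    refine (hmem _).mpr ⟨fun i => hp _, fun k' l j => ?_⟩
    obtain ⟨i₀, h1⟩ := hc (k' + k) l j
    refine ⟨max i₀ (1 - k').toNat, fun i hi => ?_⟩
    have h2 : 1 ≤ (i:ℤ) + k' := by omega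
    show (Δ (idx ((i:ℤ)+l)))^[j] (δ (idx ((idx ((i:ℤ)+k') : ℤ) + k))) < ε i
    rw [idx_cast h2, show (i:ℤ) + k' + k = (i:ℤ) + (k' + k) by ring]
    exact h1 i (le_trans (le_max_left _ _) hi)
  -- sums
  have hsum : ∀ δ ∈ T, ∀ δ' ∈ T, ∃ δ'' ∈ T, ∀ i, δ i + δ' i ≤ δ'' i := by
    intro δ hδ δ' hδ'
    refine ⟨fun i => 2 * max (δ i) (δ' i), hdouble _ (hmaxT δ hδ δ' hδ'), fun i => ?_⟩
    show δ i + δ' i ≤ 2 * max (δ i) (δ' i)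
    have h1 := le_max_left (δ i) (δ' i)
    have h2 := le_max_right (δ i) (δ' i)
    linarith
  exact ⟨hne, hev, hΔT, hdouble, hmaxT, hdom, hshift, hsum⟩
end

section
/- Let λ ∈ (0,1] and let C₀ : (0,∞) → (0,∞) be any function. Suppose (δ^i)_{i∈ℕ₀} are functions in a class S_asy of positive monotone decreasing functions on [1,∞) chosen inductively so that i·(δ⁰(t−i) + ⋯ + δ^{i−1}(t−i))^λ < δ^i(t) for all sufficiently large t (functions extended constantly on (−∞,1]). Then for every α > 0 there exists κ(α) ∈ ℕ with κ(α) > max(α, C₀(α)) such that for all i and all sufficiently large t, t' with |t − t'| ≤ α one has C₀(α)·(δ^i(t))^λ ≤ δ^{κ(α)+i}(t'). -/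
/-- Quantitative core of Lemma `sequence-exists`: if the positive, monotone decreasing
functions `δ^i` satisfy the inductive inequality
`i · (δ⁰(t−i) + ⋯ + δ^{i−1}(t−i))^λ < δ^i(t)` for large `t`, then for every `α > 0`
there is `κ(α) > max(α, C₀(α))` with `C₀(α)·(δ^i(t))^λ ≤ δ^{κ(α)+i}(t')` for all `i`
and all sufficiently large `t, t'` with `|t − t'| ≤ α`. -/
theorem stmt5 (lam : ℝ) (hlam0 : 0 < lam) (hlam1 : lam ≤ 1)
    (C₀ : ℝ → ℝ) (δ : ℕ → ℝ → ℝ)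
    (hpos : ∀ i t, 0 < δ i t)
    (hanti : ∀ i, Antitone (δ i))
    (hind : ∀ i : ℕ, ∃ T : ℝ, ∀ t ≥ T,
        (i : ℝ) * (∑ j ∈ Finset.range i, δ j (t - i)) ^ lam < δ i t) :
    ∀ α : ℝ, 0 < α → ∃ κ : ℕ, α < κ ∧ C₀ α < κ ∧
      ∀ i : ℕ, ∃ T : ℝ, ∀ t t' : ℝ, T ≤ t → T ≤ t' → |t - t'| ≤ α →
        C₀ α * (δ i t) ^ lam ≤ δ (κ + i) t' := by
  intro α hα
  set κ : ℕ := ⌈max α (C₀ α)⌉₊ + 1 with hκ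
  have hmax : max α (C₀ α) < κ := by
    calc max α (C₀ α) ≤ (⌈max α (C₀ α)⌉₊ : ℝ) := Nat.le_ceil _
    _ < κ := by exact_mod_cast Nat.lt_succ_self _
  refine ⟨κ, lt_of_le_of_lt (le_max_left _ _) hmax,
    lt_of_le_of_lt (le_max_right _ _) hmax, ?_⟩
  intro i
  obtain ⟨T, hT⟩ := hind (κ + i)
  refine ⟨T, fun t t' ht ht' habs => ?_⟩
  have hα' : t' - t ≤ α := by have := abs_le.mp habs; linarith
  have hle : t' - (κ + i : ℕ) ≤ t := by
    have h1 : α ≤ (κ : ℝ) := le_of_lt (lt_of_le_of_lt (le_max_left _ _) hmax)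
    have h2 : (κ : ℝ) ≤ (κ + i : ℕ) := by exact_mod_cast Nat.le_add_right κ i
    linarith
  have hδ : δ i t ≤ δ i (t' - (κ + i : ℕ)) := hanti i hle
  have hmem : i ∈ Finset.range (κ + i) := by
    simp [hκ]
  have hsum : δ i (t' - (κ + i : ℕ)) ≤
      ∑ j ∈ Finset.range (κ + i), δ j (t' - (κ + i : ℕ)) :=
    Finset.single_le_sum (fun j _ => (hpos j _).le) hmem
  have hpow : (δ i t) ^ lam ≤
      (∑ j ∈ Finset.range (κ + i), δ j (t' - (κ + i : ℕ))) ^ lam :=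
    Real.rpow_le_rpow (hpos i t).le (hδ.trans hsum) hlam0.le
  have hpownn : (0:ℝ) ≤ (δ i t) ^ lam := Real.rpow_nonneg (hpos i t).le lam
  have hC : C₀ α ≤ ((κ + i : ℕ) : ℝ) := by
    have h1 : C₀ α < (κ : ℝ) := lt_of_le_of_lt (le_max_right _ _) hmax
    have h2 : (κ : ℝ) ≤ (κ + i : ℕ) := by exact_mod_cast Nat.le_add_right κ i
    linarith
  calc C₀ α * (δ i t) ^ lam ≤ ((κ + i : ℕ) : ℝ) * (δ i t) ^ lam :=
        mul_le_mul_of_nonneg_right hC hpownn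
    _ ≤ ((κ + i : ℕ) : ℝ) *
        (∑ j ∈ Finset.range (κ + i), δ j (t' - (κ + i : ℕ))) ^ lam :=
        mul_le_mul_of_nonneg_left hpow (by positivity)
    _ ≤ δ (κ + i) t' := (hT t' ht').le
end

section
/- Let N be a Riemannian manifold with a smooth flow Φ whose flow lines define a 1-dimensional foliation F. Suppose there is a monotone increasing function C_flw with d(Φ_t(x), Φ_t(y)) ≤ C_flw(|t|)·d(x,y) for all x,y,t. Write d_F(x,y) ≤ (α,δ) if there is a piecewise C¹ path of arclength < α contained in one leaf of F whose endpoints lie within distance δ/2 of x and y respectively. If d_F(u,v) ≤ (α,δ) and d_F(v,w) ≤ (β,ε), and the leaf path from (a point near) u to (a point near) v is a flow segment of time length at most α, then d_F(u,w) ≤ (α + β, δ + C_flw(α)·(ε + δ) + ε). -/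
/-- Foliated distance for the foliation by flow lines of a flow `Φ`:
`d_F(x,y) ≤ (α,δ)` iff there is a flow segment of time length `≤ α` whose endpoints lie
within distance `δ/2` of `x` and `y` respectively. -/
def FlowFolDist {N : Type} [MetricSpace N] (Φ : ℝ → N → N) (x y : N) (α δ : ℝ) : Prop :=
  ∃ (p : N) (s : ℝ), |s| ≤ α ∧ dist x p ≤ δ / 2 ∧ dist y (Φ s p) ≤ δ / 2

/-- Foliated triangle inequality for the flow foliation (Lemma `foltriangle` (i)):
if `d_F(u,v) ≤ (α,δ)` (via a flow segment of time length `≤ α`) and `d_F(v,w) ≤ (β,ε)`,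
then `d_F(u,w) ≤ (α+β, δ + C_flw(α)(ε+δ) + ε)`. -/
theorem stmt9 {N : Type} [MetricSpace N] (Φ : ℝ → N → N)
    (hΦ0 : ∀ x, Φ 0 x = x) (hΦadd : ∀ s t x, Φ (s + t) x = Φ s (Φ t x))
    (Cflw : ℝ → ℝ) (hC1 : ∀ t, 1 ≤ Cflw t) (hCmono : Monotone Cflw)
    (hlip : ∀ (t : ℝ) (x y : N), dist (Φ t x) (Φ t y) ≤ Cflw |t| * dist x y)
    (u v w : N) (α β δ ε : ℝ) (hα : 0 ≤ α) (hβ : 0 ≤ β) (hδ : 0 ≤ δ) (hε : 0 ≤ ε)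
    (h1 : FlowFolDist Φ u v α δ) (h2 : FlowFolDist Φ v w β ε) :
    FlowFolDist Φ u w (α + β) (δ + Cflw α * (ε + δ) + ε) := by
  obtain ⟨p, s, hs, hup, hvp⟩ := h1
  obtain ⟨q, t, ht, hvq, hwq⟩ := h2
  refine ⟨Φ (-s) q, s + t, ?_, ?_, ?_⟩
  · calc |s + t| ≤ |s| + |t| := abs_add_le s t
    _ ≤ α + β := add_le_add hs ht
  · have hpq : dist (Φ s p) q ≤ δ / 2 + ε / 2 := by
      calc dist (Φ s p) q ≤ dist (Φ s p) v + dist v q := dist_triangle _ _ _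
      _ ≤ δ / 2 + ε / 2 := by
          rw [dist_comm]; exact add_le_add hvp hvq
    have hback : dist p (Φ (-s) q) ≤ Cflw α * (δ / 2 + ε / 2) := by
      have h0 : Φ (-s) (Φ s p) = p := by
        rw [← hΦadd, neg_add_cancel, hΦ0]
      have := hlip (-s) (Φ s p) q
      rw [h0, abs_neg] at this
      refine this.trans ?_
      have hC : Cflw |s| ≤ Cflw α := hCmono hs
      have hC0 : 0 ≤ Cflw |s| := le_trans zero_le_one (hC1 _)
      exact mul_le_mul hC hpq dist_nonneg (le_trans hC0 hC)
    calc dist u (Φ (-s) q) ≤ dist u p + dist p (Φ (-s) q) := dist_triangle _ _ _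
    _ ≤ δ / 2 + Cflw α * (δ / 2 + ε / 2) := add_le_add hup hback
    _ ≤ (δ + Cflw α * (ε + δ) + ε) / 2 := by
        have : Cflw α * (δ / 2 + ε / 2) = Cflw α * (ε + δ) / 2 := by ring
        rw [this]
        have hε2 : (0:ℝ) ≤ ε / 2 := by linarith
        linarith
  · have : Φ (s + t) (Φ (-s) q) = Φ t q := by
      rw [← hΦadd]
      have : s + t + -s = t := by ring
      rw [this]
    rw [this]
    refine hwq.trans ?_
    have hC : (1:ℝ) ≤ Cflw α := hC1 α
    have : 0 ≤ Cflw α * (ε + δ) := by nlinarith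
    linarith
end

section
/- Let N be a complete Riemannian manifold with sectional curvature satisfying −b² ≤ K ≤ −a² for constants 0 < a ≤ b, let Φ be the geodesic flow on the unit sphere bundle SN, and set C = (1+b²)^{1/2}, D = 1/a, E(α) = (2/b)·sinh((b/2)(α + 1/a)). Assume the known estimate: for asymptotic unit vectors v, w with d(v,w) ≤ α and all t, t', d_{F_geo}(Φ_t(v), Φ_{t'}(w)) ≤ (C(α + |t−t'| + D), 2C·E(α)·e^{−at}). Assume also d(Φ_s(x),Φ_s(y)) ≤ C_flw(|s|)·d(x,y). Then for arbitrary v, w (not necessarily asymptotic), any monotone decreasing δ : [1,∞) → (0,∞), and t' ≥ t with t' − t ≤ α: if d_{F_asy}(v,w) ≤ (α, δ(t)) then d_{F_geo}(Φ_t(v), Φ_{t'}(w)) ≤ (C(2α + D), 2C·E(α)·e^{−at} + C_flw(t+α)·δ(t)). -/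
/-- Quantitative estimate in the proof of Theorem `asytogeo`: with
`C = √(1+b²)`, `D = 1/a`, `E(α) = (2/b)·sinh((b/2)(α+1/a))`, the geodesic flow turns
asymptotic foliated control `(α, δ(t))` into geodesic foliated control
`(C(2α+D), 2C·E(α)·e^{−at} + C_flw(t+α)·δ(t))`.  Here `d_{F_asy}(v,w) ≤ (α,δ(t))`
is witnessed by asymptotic `v₀, w₀` with `d(v₀,w₀) ≤ α`, `d(v,v₀) ≤ δ(t)/2`,
`d(w,w₀) ≤ δ(t)/2`. -/
theorem stmt15 {SN : Type} [MetricSpace SN] (Φ : ℝ → SN → SN)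
    (a b : ℝ) (ha : 0 < a) (hab : a ≤ b)
    (Asym : SN → SN → Prop)
    (Cflw : ℝ → ℝ) (hC1 : ∀ t, 1 ≤ Cflw t) (hCmono : Monotone Cflw)
    (hlip : ∀ (s : ℝ) (x y : SN), dist (Φ s x) (Φ s y) ≤ Cflw |s| * dist x y)
    (hasym : ∀ (v w : SN) (α t t' : ℝ), Asym v w → dist v w ≤ α →
      FlowFolDist Φ (Φ t v) (Φ t' w)
        (Real.sqrt (1 + b ^ 2) * (α + |t - t'| + 1 / a))
        (2 * Real.sqrt (1 + b ^ 2) * ((2 / b) * Real.sinh ((b / 2) * (α + 1 / a))) *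
          Real.exp (-(a * t))))
    (v w : SN) (α : ℝ) (hα : 0 < α)
    (δ : ℝ → ℝ) (hδpos : ∀ t, 0 < δ t) (hδanti : Antitone δ)
    (t t' : ℝ) (ht : 1 ≤ t) (htt' : t ≤ t') (hlt : t' - t ≤ α)
    (hvw : ∃ v₀ w₀ : SN, Asym v₀ w₀ ∧ dist v₀ w₀ ≤ α ∧
      dist v v₀ ≤ δ t / 2 ∧ dist w w₀ ≤ δ t / 2) :
    FlowFolDist Φ (Φ t v) (Φ t' w)
      (Real.sqrt (1 + b ^ 2) * (2 * α + 1 / a))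
      (2 * Real.sqrt (1 + b ^ 2) * ((2 / b) * Real.sinh ((b / 2) * (α + 1 / a))) *
          Real.exp (-(a * t)) + Cflw (t + α) * δ t) := by

  obtain ⟨v₀, w₀, hA, hd, hv, hw⟩ := hvw
  obtain ⟨p, s, hs, hp1, hp2⟩ := hasym v₀ w₀ α t t' hA hd
  refine ⟨p, s, ?_, ?_, ?_⟩
  · refine hs.trans ?_
    have hC : (0:ℝ) ≤ Real.sqrt (1 + b ^ 2) := Real.sqrt_nonneg _
    have : α + |t - t'| + 1 / a ≤ 2 * α + 1 / a := by
      have : |t - t'| ≤ α := by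
        rw [abs_sub_comm, abs_of_nonneg (by linarith)]; linarith
      linarith
    exact mul_le_mul_of_nonneg_left this hC
  · calc dist (Φ t v) p ≤ dist (Φ t v) (Φ t v₀) + dist (Φ t v₀) p := dist_triangle _ _ _
      _ ≤ Cflw |t| * dist v v₀ + dist (Φ t v₀) p := by
          have := hlip t v v₀; linarith
      _ ≤ _ := by
          have h1 : Cflw |t| ≤ Cflw (t + α) := by
            apply hCmono; rw [abs_of_nonneg (by linarith)]; linarith
          have h2 : Cflw |t| * dist v v₀ ≤ Cflw (t + α) * (δ t / 2) := by
            exact mul_le_mul h1 hv dist_nonneg (le_trans zero_le_one (hC1 _))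
          linarith
  · calc dist (Φ t' w) (Φ s p) ≤ dist (Φ t' w) (Φ t' w₀) + dist (Φ t' w₀) (Φ s p) :=
          dist_triangle _ _ _
      _ ≤ Cflw |t'| * dist w w₀ + dist (Φ t' w₀) (Φ s p) := by
          have := hlip t' w w₀; linarith
      _ ≤ _ := by
          have h1 : Cflw |t'| ≤ Cflw (t + α) := by
            apply hCmono; rw [abs_of_nonneg (by linarith)]; linarith
          have h2 : Cflw |t'| * dist w w₀ ≤ Cflw (t + α) * (δ t / 2) := by
            have h0 : (0:ℝ) ≤ Cflw (t + α) := le_trans zero_le_one (hC1 _)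
            exact mul_le_mul h1 hw dist_nonneg h0
          linarith
end
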